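/- arXiv:2603.06155 — 2 statements merged into one kernel-verified Lean document; each statement's English description precedes it below -/
import Mathlib

section
/- Let 𝒪 be an order ideal in P = K[x_0,…,x_n] and fix an arbitrary labeling σ_1, σ_2, … of its border ∂𝒪. Then the cones of the associated border reduction structure are pairwise disjoint: for all indices i ≠ j, C(σ_i) ∩ C(σ_j) = ∅. -/
open MvPolynomial

namespace Border

/-- A term of `K[x_0, …, x_n]`, identified with its exponent vector. -/
abbrev Term (n : ℕ) := Fin (n + 1) →₀ ℕ

variable {n : ℕ}

/-- The (standard) degree of a term. -/
def tdeg (m : Term n) : ℕ := ∑ i, m i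

/-- An order ideal: a nonempty set of terms closed under divisors. -/
def IsOrderIdeal (O : Set (Term n)) : Prop :=
  O.Nonempty ∧ ∀ τ ∈ O, ∀ τ' : Term n, τ' ≤ τ → τ' ∈ O

/-- The border `∂𝒪 = (x_0·𝒪 ∪ ⋯ ∪ x_n·𝒪) ∖ 𝒪`. -/
def border (O : Set (Term n)) : Set (Term n) :=
  {σ | σ ∉ O ∧ ∃ r : Fin (n + 1), ∃ τ ∈ O, σ = τ + Finsupp.single r 1}

/-- Multiplicative set of a border term `σ`, with respect to a labeling `lab` of the border:
`𝒯_σ = {η : σ' ∤ η·σ for every border term σ' with a larger label}`. -/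
def mulSet (O : Set (Term n)) (lab : Term n → ℕ) (σ : Term n) : Set (Term n) :=
  {η | ∀ σ' ∈ border O, lab σ < lab σ' → ¬ σ' ≤ η + σ}

/-- The cone `C(σ) = {η·σ : η ∈ 𝒯_σ}`. -/
def cone (O : Set (Term n)) (lab : Term n → ℕ) (σ : Term n) : Set (Term n) :=
  (fun η => η + σ) '' mulSet O lab σ

/-- A labeling of the border which is injective and ordered increasingly by degree. -/
def DegOrderedLabeling (O : Set (Term n)) (lab : Term n → ℕ) : Prop :=
  Set.InjOn lab (border O) ∧
    ∀ σ ∈ border O, ∀ σ' ∈ border O, lab σ < lab σ' → tdeg σ ≤ tdeg σ'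

/-- Iterated border closures: `∂⁰𝒪 := 𝒪`, and the `(k+1)`-st closure adds the border. -/
def borderClosure (O : Set (Term n)) : ℕ → Set (Term n)
  | 0 => O
  | k + 1 => borderClosure O k ∪ border (borderClosure O k)

/-- The index `ind_𝒪(τ)`: the least `k` with `τ ∈ ∂^k𝒪`. -/
noncomputable def ind (O : Set (Term n)) (τ : Term n) : ℕ :=
  sInf {k | τ ∈ borderClosure O k}

/-- Degree-`d` part of a set of terms. -/
def Od (O : Set (Term n)) (d : ℕ) : Set (Term n) := {τ | τ ∈ O ∧ tdeg τ = d}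

variable {K : Type*} [Field K]

/-- The index of a nonzero polynomial: the maximal index of a term of its support. -/
noncomputable def indP (O : Set (Term n)) (f : MvPolynomial (Fin (n + 1)) K) : ℕ :=
  f.support.sup (ind O)

/-- A homogeneous `∂𝒪`-prebasis: a family `g σ = σ - Σ_{τ ∈ 𝒪_{deg σ}} c_{στ} τ`. -/
def IsPrebasis (O : Set (Term n)) (g : Term n → MvPolynomial (Fin (n + 1)) K) : Prop :=
  ∀ σ ∈ border O, ∀ τ ∈ (monomial σ (1 : K) - g σ).support, τ ∈ O ∧ tdeg τ = tdeg σ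

/-- The set of border reductors `𝒯G = {η·g_σ : σ ∈ ∂𝒪, η ∈ 𝒯_σ}`. -/
def reductors (O : Set (Term n)) (lab : Term n → ℕ)
    (g : Term n → MvPolynomial (Fin (n + 1)) K) : Set (MvPolynomial (Fin (n + 1)) K) :=
  {p | ∃ σ ∈ border O, ∃ η ∈ mulSet O lab σ, p = monomial η (1 : K) * g σ}

/-- The degree-`d` border reductors `𝒯G_d = 𝒯G ∩ P_d`. -/
def reductorsDeg (O : Set (Term n)) (lab : Term n → ℕ)
    (g : Term n → MvPolynomial (Fin (n + 1)) K) (d : ℕ) :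
    Set (MvPolynomial (Fin (n + 1)) K) :=
  reductors O lab g ∩ {p | p.IsHomogeneous d}

/-- One step of the border reduction relation `→_G`. -/
def Step (O : Set (Term n)) (lab : Term n → ℕ)
    (g : Term n → MvPolynomial (Fin (n + 1)) K)
    (f h : MvPolynomial (Fin (n + 1)) K) : Prop :=
  ∃ σ ∈ border O, ∃ η ∈ mulSet O lab σ, η + σ ∈ f.support ∧
    h = f - f.coeff (η + σ) • (monomial η (1 : K) * g σ)

/-- The border reduction relation `→⁺_G` (finitely many, possibly zero, steps). -/
def Reduces (O : Set (Term n)) (lab : Term n → ℕ)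
    (g : Term n → MvPolynomial (Fin (n + 1)) K) :
    MvPolynomial (Fin (n + 1)) K → MvPolynomial (Fin (n + 1)) K → Prop :=
  Relation.ReflTransGen (Step O lab g)

/-- The `K`-vector space spanned by a set of terms. -/
noncomputable def spanTerms (K : Type*) [Field K] (S : Set (Term n)) :
    Submodule K (MvPolynomial (Fin (n + 1)) K) :=
  Submodule.span K ((fun τ => monomial τ (1 : K)) '' S)

/-- The ideal `(G)` generated by a `∂𝒪`-prebasis. -/
noncomputable def idealG (O : Set (Term n)) (g : Term n → MvPolynomial (Fin (n + 1)) K) :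
    Ideal (MvPolynomial (Fin (n + 1)) K) :=
  Ideal.span (g '' border O)

/-- The degree-`d` part `I_d` of an ideal, as a `K`-vector subspace. -/
noncomputable def degPart (I : Ideal (MvPolynomial (Fin (n + 1)) K)) (d : ℕ) :
    Submodule K (MvPolynomial (Fin (n + 1)) K) :=
  Submodule.restrictScalars K I ⊓ homogeneousSubmodule (Fin (n + 1)) K d

/-- Homogeneous ideal. -/
def IsHomogeneousIdeal (I : Ideal (MvPolynomial (Fin (n + 1)) K)) : Prop :=
  ∀ f ∈ I, ∀ d : ℕ, homogeneousComponent d f ∈ I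

/-- `G` is a homogeneous `∂𝒪`-basis of `J`: it is a prebasis contained in `J` and for every
`d` one has `P_d = J_d ⊕ ⟨𝒪_d⟩`, i.e. the residue classes of `𝒪_d` are a basis of `P_d/J_d`. -/
def IsBorderBasisOf (O : Set (Term n)) (g : Term n → MvPolynomial (Fin (n + 1)) K)
    (J : Ideal (MvPolynomial (Fin (n + 1)) K)) : Prop :=
  IsPrebasis O g ∧ (∀ σ ∈ border O, g σ ∈ J) ∧
    ∀ d : ℕ, degPart J d ⊔ spanTerms K (Od O d) = homogeneousSubmodule (Fin (n + 1)) K d ∧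
      Disjoint (degPart J d) (spanTerms K (Od O d))

/-- An `m`-lower representation of `f` by `𝒯G`: `f = Σ c_j • η_j·g_{σ_j}` with distinct
pairs `(η_j, σ_j)`, `η_j ∈ 𝒯_{σ_j}` and `ind(η_j σ_j) ≤ m`. -/
def HasLRep (O : Set (Term n)) (lab : Term n → ℕ)
    (g : Term n → MvPolynomial (Fin (n + 1)) K)
    (f : MvPolynomial (Fin (n + 1)) K) (m : ℕ) : Prop :=
  ∃ (s : Finset (Term n × Term n)) (c : Term n × Term n → K),
    (∀ p ∈ s, p.2 ∈ border O ∧ p.1 ∈ mulSet O lab p.2 ∧ ind O (p.1 + p.2) ≤ m) ∧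
    f = ∑ p ∈ s, c p • (monomial p.1 (1 : K) * g p.2)

/-- An `m`-lower representation of `f` by `𝒯G_d`. -/
def HasLRepDeg (O : Set (Term n)) (lab : Term n → ℕ)
    (g : Term n → MvPolynomial (Fin (n + 1)) K)
    (f : MvPolynomial (Fin (n + 1)) K) (m d : ℕ) : Prop :=
  ∃ (s : Finset (Term n × Term n)) (c : Term n × Term n → K),
    (∀ p ∈ s, p.2 ∈ border O ∧ p.1 ∈ mulSet O lab p.2 ∧ ind O (p.1 + p.2) ≤ m ∧
      (monomial p.1 (1 : K) * g p.2).IsHomogeneous d) ∧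
    f = ∑ p ∈ s, c p • (monomial p.1 (1 : K) * g p.2)

/-- The subtype of terms of `𝒪` of degree `d`. -/
abbrev OdSub (O : Set (Term n)) (d : ℕ) : Type _ := {τ : Term n // τ ∈ Od O d}

lemma tdeg_component_lt {d : ℕ} (m : Term n) (h : tdeg m = d) (i : Fin (n + 1)) :
    m i < d + 1 := by
  have : m i ≤ tdeg m :=
    Finset.single_le_sum (f := fun j => m j) (fun j _ => Nat.zero_le _) (Finset.mem_univ i)
  omega

instance (O : Set (Term n)) (d : ℕ) : Finite (OdSub O d) := by
  have hinj : Function.Injective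
      (fun τ : OdSub O d => fun i : Fin (n + 1) =>
        (⟨τ.1 i, tdeg_component_lt τ.1 τ.2.2 i⟩ : Fin (d + 1))) := by
    intro a b hab
    apply Subtype.ext
    apply Finsupp.ext
    intro i
    simpa using congrArg Fin.val (congrFun hab i)
  exact Finite.of_injective _ hinj

noncomputable instance (O : Set (Term n)) (d : ℕ) : Fintype (OdSub O d) :=
  Fintype.ofFinite _

open scoped Classical in
/-- The `r`-th `d`-graded formal multiplication matrix of a prebasis `G`,
with rows indexed by `𝒪_{d+1}` and columns by `𝒪_d`. -/
noncomputable def multMatrix (O : Set (Term n))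
    (g : Term n → MvPolynomial (Fin (n + 1)) K) (r : Fin (n + 1)) (d : ℕ) :
    Matrix (OdSub O (d + 1)) (OdSub O d) K :=
  Matrix.of fun τ' τ =>
    if τ.1 + Finsupp.single r 1 ∈ O then
      (if τ.1 + Finsupp.single r 1 = τ'.1 then 1 else 0)
    else (monomial (τ.1 + Finsupp.single r 1) (1 : K)
            - g (τ.1 + Finsupp.single r 1)).coeff τ'.1

/-- The minimum degree of a border term. -/
noncomputable def minDegBorder (O : Set (Term n)) : ℕ := sInf (tdeg '' border O)

/-- The `d`-th Macaulay transformation `a^{⟨d⟩}`, computed greedily. -/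
noncomputable def macaulay : ℕ → ℕ → ℕ
  | 0, _ => 0
  | d + 1, a =>
    if a = 0 then 0
    else
      Nat.choose (sSup {k | Nat.choose k (d + 1) ≤ a} + 1) (d + 2) +
        macaulay d (a - Nat.choose (sSup {k | Nat.choose k (d + 1) ≤ a}) (d + 1))

/-- An ideal is generated in degrees `≤ m` if it is generated by its homogeneous
elements of degree `≤ m`. -/
def GeneratedInDegLE (I : Ideal (MvPolynomial (Fin (n + 1)) K)) (m : ℕ) : Prop :=
  I = Ideal.span {f | f ∈ I ∧ ∃ d ≤ m, f.IsHomogeneous d}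

lemma le_of_mem_cone {O : Set (Term n)} {lab : Term n → ℕ} {σ τ : Term n}
    (hτ : τ ∈ cone O lab σ) : σ ≤ τ := by
  obtain ⟨η, -, rfl⟩ := hτ
  exact le_add_self

lemma notMem_cone_of_lt {O : Set (Term n)} {lab : Term n → ℕ} {σ σ' τ : Term n}
    (hσ' : σ' ∈ border O) (hlt : lab σ < lab σ') (hle : σ' ≤ τ) : τ ∉ cone O lab σ := by
  rintro ⟨η, hη, rfl⟩
  exact hη σ' hσ' hlt hle

lemma disjoint_cone_of_lt {O : Set (Term n)} {lab : Term n → ℕ} {σ σ' : Term n}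
    (hσ' : σ' ∈ border O) (hlt : lab σ < lab σ') : Disjoint (cone O lab σ) (cone O lab σ') :=
  Set.disjoint_left.2 fun _ hτ hτ' => notMem_cone_of_lt hσ' hlt (le_of_mem_cone hτ') hτ

theorem cones_disjoint_general (O : Set (Term n))
    (lab : Term n → ℕ) (hinj : Set.InjOn lab (border O))
    (σ₁ σ₂ : Term n) (h₁ : σ₁ ∈ border O) (h₂ : σ₂ ∈ border O) (hne : σ₁ ≠ σ₂) :
    cone O lab σ₁ ∩ cone O lab σ₂ = ∅ := by
  rw [← Set.disjoint_iff_inter_eq_empty]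
  rcases lt_or_gt_of_ne (hinj.ne h₁ h₂ hne) with hlt | hlt
  · exact disjoint_cone_of_lt h₂ hlt
  · exact (disjoint_cone_of_lt h₁ hlt).symm

/-- **Disjointness of cones.** For an order ideal `𝒪` with an arbitrary injective labeling of
its border, the cones of distinct border terms are disjoint. -/
theorem cones_disjoint (O : Set (Term n)) (hO : IsOrderIdeal O)
    (lab : Term n → ℕ) (hinj : Set.InjOn lab (border O))
    (σ₁ σ₂ : Term n) (h₁ : σ₁ ∈ border O) (h₂ : σ₂ ∈ border O) (hne : σ₁ ≠ σ₂) :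
    cone O lab σ₁ ∩ cone O lab σ₂ = ∅ :=
  cones_disjoint_general O lab hinj σ₁ σ₂ h₁ h₂ hne

end Border
end

section
/- Let 𝒪 be an order ideal in P = K[x_0,…,x_n] and fix a labeling of ∂𝒪 ordered increasingly by degree. Then for every σ ∈ ∂𝒪, every τ ∈ 𝒪 with deg(τ) = deg(σ), and every η in the multiplicative set 𝒯_σ, one has ind_𝒪(η·σ) > ind_𝒪(η·τ). -/
open MvPolynomial

namespace Border

variable {n : ℕ}

variable {K : Type*} [Field K]

/-!
Each variable factor raises the index by at most one, so for `τ ∈ 𝒪` one has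
`ind(η·τ) ≤ deg η`. Conversely every term of `∂^{≤k}𝒪` outside `𝒪` is a multiple `c·b` of a
border term `b` with `deg c < k`. If `b ∣ η·σ` with `η ∈ 𝒯_σ`, then `b` does not carry a
larger label than `σ`, so `deg b ≤ deg σ` and hence `deg c ≥ deg η`: thus `ind(η·σ) > deg η`.
-/

lemma tdeg_eq_degree (m : Term n) : tdeg m = m.degree :=
  (Finsupp.degree_eq_sum m).symm

lemma tdeg_add (a b : Term n) : tdeg (a + b) = tdeg a + tdeg b := by
  simp only [tdeg_eq_degree, map_add]

lemma tdeg_single (r : Fin (n + 1)) (k : ℕ) : tdeg (Finsupp.single r k) = k := by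
  rw [tdeg_eq_degree, Finsupp.degree_single]

lemma DegOrderedLabeling.tdeg_le {O : Set (Term n)} {lab : Term n → ℕ}
    (hlab : DegOrderedLabeling O lab) {b σ : Term n} (hb : b ∈ border O) (hσ : σ ∈ border O)
    (h : lab b ≤ lab σ) : tdeg b ≤ tdeg σ := by
  rcases h.lt_or_eq with h | h
  · exact hlab.2 b hb σ hσ h
  · rw [hlab.1 hb hσ h]

lemma lab_le_of_le_add_of_mem_mulSet {O : Set (Term n)} {lab : Term n → ℕ} {σ η b : Term n}
    (hη : η ∈ mulSet O lab σ) (hb : b ∈ border O) (hle : b ≤ η + σ) : lab b ≤ lab σ :=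
  not_lt.1 fun hlt => hη b hb hlt hle

section borderClosure

variable (O : Set (Term n))

lemma borderClosure_mono : Monotone (borderClosure O) :=
  monotone_nat_of_le_succ fun _ => Set.subset_union_left

lemma single_add_mem_borderClosure_succ {t : Term n} {k : ℕ} (ht : t ∈ borderClosure O k)
    (r : Fin (n + 1)) : Finsupp.single r 1 + t ∈ borderClosure O (k + 1) := by
  by_cases hk : Finsupp.single r 1 + t ∈ borderClosure O k
  · exact Or.inl hk
  · exact Or.inr ⟨hk, r, t, ht, add_comm _ _⟩

lemma add_mem_borderClosure (η : Term n) :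
    ∀ {t : Term n} {k : ℕ}, t ∈ borderClosure O k → η + t ∈ borderClosure O (k + tdeg η) := by
  induction η using Finsupp.induction_linear with
  | zero =>
    intro t k ht
    simpa [tdeg_eq_degree] using ht
  | add f g hf hg =>
    intro t k ht
    rw [add_assoc, tdeg_add, add_comm (tdeg f), ← add_assoc]
    exact hf (hg ht)
  | single r a =>
    intro t k ht
    induction a with
    | zero => simpa [tdeg_eq_degree] using ht
    | succ a ih =>
      rw [Finsupp.single_add, add_comm (Finsupp.single r a), add_assoc, tdeg_add,
        tdeg_single r 1, add_comm 1, ← add_assoc]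
      exact single_add_mem_borderClosure_succ O ih r

lemma mem_or_exists_border_of_mem_borderClosure {t : Term n} {k : ℕ}
    (ht : t ∈ borderClosure O k) :
    t ∈ O ∨ ∃ b ∈ border O, ∃ c : Term n, t = c + b ∧ tdeg c < k := by
  induction k generalizing t with
  | zero => exact Or.inl ht
  | succ k ih =>
    rcases ht with ht | ⟨ht, r, s, hs, rfl⟩
    · rcases ih ht with ht | ⟨b, hb, c, rfl, hc⟩
      · exact Or.inl ht
      · exact Or.inr ⟨b, hb, c, rfl, by omega⟩
    · rcases ih hs with hs | ⟨b, hb, c, rfl, hc⟩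
      · refine Or.inr ⟨s + Finsupp.single r 1, ⟨?_, r, s, hs, rfl⟩, 0, (zero_add _).symm, ?_⟩
        · exact fun hO => ht (borderClosure_mono O (Nat.zero_le k) hO)
        · simp [tdeg]
      · refine Or.inr ⟨b, hb, c + Finsupp.single r 1, add_right_comm _ _ _, ?_⟩
        rw [tdeg_add, tdeg_single]
        omega

lemma mem_borderClosure_ind {t : Term n} {k : ℕ} (ht : t ∈ borderClosure O k) :
    t ∈ borderClosure O (ind O t) :=
  Nat.sInf_mem (s := {k | t ∈ borderClosure O k}) ⟨k, ht⟩

lemma ind_le {t : Term n} {k : ℕ} (ht : t ∈ borderClosure O k) : ind O t ≤ k :=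
  Nat.sInf_le ht

lemma ind_add_le_tdeg {τ : Term n} (hτ : τ ∈ O) (η : Term n) : ind O (η + τ) ≤ tdeg η := by
  simpa using ind_le O (add_mem_borderClosure O η (k := 0) hτ)

lemma tdeg_lt_ind_add {lab : Term n → ℕ} (hO : IsOrderIdeal O) (hlab : DegOrderedLabeling O lab)
    {σ : Term n} (hσ : σ ∈ border O) {η : Term n} (hη : η ∈ mulSet O lab σ) :
    tdeg η < ind O (η + σ) := by
  have hmem := mem_borderClosure_ind O (add_mem_borderClosure O η (k := 1) (Or.inr hσ))
  rcases mem_or_exists_border_of_mem_borderClosure O hmem with hmemO | ⟨b, hb, c, hbc, hc⟩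
  · exact absurd (hO.2 _ hmemO σ le_add_self) hσ.1
  · have hb_le : tdeg b ≤ tdeg σ :=
      hlab.tdeg_le hb hσ (lab_le_of_le_add_of_mem_mulSet hη hb (hbc ▸ le_add_self))
    have hdeg := congrArg tdeg hbc
    rw [tdeg_add, tdeg_add] at hdeg
    omega

end borderClosure

theorem ind_mul_lt_general (O : Set (Term n)) (hO : IsOrderIdeal O)
    (lab : Term n → ℕ) (hlab : DegOrderedLabeling O lab)
    (σ : Term n) (hσ : σ ∈ border O) (τ : Term n) (hτ : τ ∈ O)
    (η : Term n) (hη : η ∈ mulSet O lab σ) :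
    ind O (η + τ) < ind O (η + σ) :=
  (ind_add_le_tdeg O hτ η).trans_lt (tdeg_lt_ind_add O hO hlab hσ hη)

/-- **Index inequality.** For a degree-ordered labeling: if `σ ∈ ∂𝒪`, `τ ∈ 𝒪` with
`deg τ = deg σ`, and `η ∈ 𝒯_σ`, then `ind(η·σ) > ind(η·τ)`. -/
theorem ind_mul_lt (O : Set (Term n)) (hO : IsOrderIdeal O)
    (lab : Term n → ℕ) (hlab : DegOrderedLabeling O lab)
    (σ : Term n) (hσ : σ ∈ border O) (τ : Term n) (hτ : τ ∈ O) (hdeg : tdeg τ = tdeg σ)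
    (η : Term n) (hη : η ∈ mulSet O lab σ) :
    ind O (η + τ) < ind O (η + σ) :=
  ind_mul_lt_general O hO lab hlab σ hσ τ hτ η hη

end Border
end
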